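/- arXiv:2008.06903 — 2 statements merged into one kernel-verified Lean document; each statement's English description precedes it below -/
import Mathlib

section
/- Assume in addition that H is superlinear: H(s)/s → ∞ as s → ∞. Then for every xⁿ ∈ Q: (i) J(z_k) → +∞ along any sequence (z_k) ⊆ Q converging to a point of Q̄ \ Q; and (ii) J attains its infimum over Q at a unique point x ∈ Q. -/
open Finset Filter

noncomputable section

/-- Forward difference onto cells: `(D_h l)_{i-1/2} = (l_i - l_{i-1})/h` (use index `i`, `1 ≤ i ≤ M`). -/
def DhOp (h : ℝ) (l : ℕ → ℝ) (i : ℕ) : ℝ := (l i - l (i - 1)) / h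

/-- Difference of a cell function back onto nodes: `(d_h φ)_i = (φ_{i+1/2} - φ_{i-1/2})/h`;
a cell function `φ` is encoded by `φ i = φ_{i-1/2}`. -/
def dhOp (h : ℝ) (φ : ℕ → ℝ) (i : ℕ) : ℝ := (φ (i + 1) - φ i) / h

/-- Central difference `D̃_h` on nodes. -/
def DtOp (M : ℕ) (h : ℝ) (l : ℕ → ℝ) (i : ℕ) : ℝ :=
  if i = 0 then (l 1 - l 0) / h
  else if i = M then (l M - l (M - 1)) / h
  else (l (i + 1) - l (i - 1)) / (2 * h)

/-- Node inner product `⟨l, g⟩_E`. -/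
def ipE (M : ℕ) (h : ℝ) (l g : ℕ → ℝ) : ℝ :=
  h * (l 0 * g 0 / 2 + (∑ i ∈ Finset.Ioo 0 M, l i * g i) + l M * g M / 2)

/-- Cell inner product `⟨φ, ψ⟩_C`. -/
def ipC (M : ℕ) (h : ℝ) (φ ψ : ℕ → ℝ) : ℝ :=
  h * ∑ i ∈ Finset.Icc 1 M, φ i * ψ i

/-- The admissible (ordered) set `Q`. -/
def inQ (M : ℕ) (X0 XM : ℝ) (l : ℕ → ℝ) : Prop :=
  l 0 = X0 ∧ l M = XM ∧ ∀ i, 1 ≤ i → i ≤ M → l (i - 1) < l i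

/-- The closure `Q̄` of the admissible set. -/
def inQbar (M : ℕ) (X0 XM : ℝ) (l : ℕ → ℝ) : Prop :=
  l 0 = X0 ∧ l M = XM ∧ ∀ i, 1 ≤ i → i ≤ M → l (i - 1) ≤ l i

/-- `Ŝ[x]_i = ⟨K(x_i - y), u₀(Y)⟩_E` for a kernel `K` (e.g. `K = W_c'`);
also used as `w[x]_i` when `K = W` itself. -/
def Shat (M : ℕ) (h : ℝ) (K : ℝ → ℝ) (u0 x : ℕ → ℝ) (i : ℕ) : ℝ :=
  ipE M h (fun j => K (x i - x j)) u0

/-- The cell function `G[x]_{i-1/2} = s·H'(s) - H(s)`, `s = u_{0,i-1/2}/(D_h x)_{i-1/2}`. -/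
def Gcell (h : ℝ) (H : ℝ → ℝ) (u0half x : ℕ → ℝ) (i : ℕ) : ℝ :=
  u0half i / DhOp h x i * deriv H (u0half i / DhOp h x i) - H (u0half i / DhOp h x i)

/-- The mobility coefficient `c[x]_i = u_{0,i}² / ((D̃_h x)_i · f(u_{0,i}/(D̃_h x)_i))`. -/
def cCoef (M : ℕ) (h : ℝ) (f : ℝ → ℝ) (u0 x : ℕ → ℝ) (i : ℕ) : ℝ :=
  u0 i ^ 2 / (DtOp M h x i * f (u0 i / DtOp M h x i))

/-- `xp` is a scheme update of `x`: the fully discrete convex-splitting scheme equations. -/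
def SchemeUpdate (M : ℕ) (h τ : ℝ) (H f Vc Ve Wc We : ℝ → ℝ)
    (u0 u0half x xp : ℕ → ℝ) : Prop :=
  ∀ i, 1 ≤ i → i ≤ M - 1 →
    cCoef M h f u0 x i * (xp i - x i) / τ =
      -dhOp h (Gcell h H u0half xp) i - u0 i * deriv Vc (xp i)
        + u0 i * deriv Ve (x i)
        - u0 i * Shat M h (deriv Wc) u0 xp i + u0 i * Shat M h (deriv We) u0 x i

/-- The discrete total energy `E_N`. -/
def EN (M : ℕ) (h : ℝ) (H V W : ℝ → ℝ) (u0 u0half x : ℕ → ℝ) : ℝ :=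
  h * ∑ i ∈ Finset.Icc 1 M, H (u0half i / DhOp h x i) * DhOp h x i
    + ipE M h u0 (fun i => V (x i))
    + 1 / 2 * ipE M h u0 (fun i => Shat M h W u0 x i)

/-- The convex part `E_{N,c}` of the discrete total energy. -/
def ENc (M : ℕ) (h : ℝ) (H Vc Wc : ℝ → ℝ) (u0 u0half x : ℕ → ℝ) : ℝ :=
  h * ∑ i ∈ Finset.Icc 1 M, H (u0half i / DhOp h x i) * DhOp h x i
    + ipE M h u0 (fun i => Vc (x i))
    + 1 / 2 * ipE M h u0 (fun i => Shat M h Wc u0 x i)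

/-- The concave (subtracted convex) part `E_{N,e}` of the discrete total energy. -/
def ENe (M : ℕ) (h : ℝ) (Ve We : ℝ → ℝ) (u0 x : ℕ → ℝ) : ℝ :=
  ipE M h u0 (fun i => Ve (x i)) + 1 / 2 * ipE M h u0 (fun i => Shat M h We u0 x i)

/-- The convex functional `J` whose minimizer over `Q` is the scheme update of `xn`. -/
def Jfun (M : ℕ) (h τ : ℝ) (H f Vc Ve Wc We : ℝ → ℝ)
    (u0 u0half xn z : ℕ → ℝ) : ℝ :=
  1 / (2 * τ) * ipE M h (fun i => cCoef M h f u0 xn i * (z i - xn i)) (fun i => z i - xn i)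
    + h * ∑ i ∈ Finset.Icc 1 M, H (u0half i / DhOp h z i) * DhOp h z i
    + ipE M h u0 (fun i => Vc (z i))
    + 1 / 2 * ipE M h u0 (fun i => Shat M h Wc u0 z i)
    - ipE M h (fun i => u0 i * deriv Ve (xn i)) z
    - ipE M h (fun i => u0 i * Shat M h (deriv We) u0 xn i) z

/-!
Write `J = q + E_{N,c} - ℓ` with `q` the mobility-weighted quadratic term and `ℓ` linear. Each cell
term `h H(u/D) D` of `E_{N,c}` is a perspective of the convex function `H`: it is convex in `D`,
bounded below, and by superlinearity of `H` it blows up as `D → 0⁺`. The potential and interaction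
terms and `ℓ` are continuous and only see the nodes, so they are bounded on the compact closure of
`Q`; as `q ≥ 0`, a bound `J ≤ A` forces every `D` above some `ε > 0`. This gives the blow-up at
`Q̄ \ Q` and confines the minimisation to a compact subset of `Q` on which `J` is continuous.
Uniqueness: the mobilities are positive, so `q`, and with it `J`, is strictly convex in the
interior nodes.
-/

open Topology

section ConvexFunctions

variable {H : ℝ → ℝ}

lemma ConvexOn.map_add_div_two_le {s : Set ℝ} {g : ℝ → ℝ} (hg : ConvexOn ℝ s g) {a b : ℝ}
    (ha : a ∈ s) (hb : b ∈ s) : g ((a + b) / 2) ≤ (g a + g b) / 2 := by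
  have := hg.2 ha hb (by norm_num : (0 : ℝ) ≤ 1 / 2) (by norm_num : (0 : ℝ) ≤ 1 / 2) (by norm_num)
  simp only [smul_eq_mul] at this
  calc g ((a + b) / 2) = g (1 / 2 * a + 1 / 2 * b) := by ring_nf
    _ ≤ 1 / 2 * g a + 1 / 2 * g b := this
    _ = (g a + g b) / 2 := by ring

lemma ConvexOn.exists_neg_le_of_tendsto_div_atTop (hH : ConvexOn ℝ (Set.Ioi 0) H)
    (hsup : Tendsto (fun s => H s / s) atTop atTop) :
    ∃ C, 0 ≤ C ∧ ∀ s, 0 < s → -C ≤ H s := by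
  obtain ⟨s₀, hs₀, hHs₀⟩ : ∃ s₀ : ℝ, 0 < s₀ ∧ ∀ s, s₀ ≤ s → 0 ≤ H s := by
    obtain ⟨s₁, hs₁⟩ := eventually_atTop.1 (hsup.eventually_ge_atTop 0)
    refine ⟨max s₁ 1, by positivity, fun s hs => ?_⟩
    have hs_pos : 0 < s := lt_of_lt_of_le one_pos (le_of_max_le_right hs)
    simpa [le_div_iff₀ hs_pos] using hs₁ s (le_of_max_le_left hs)
  -- Below `s₀`, `H` lies above the secant line through `s₀` and `s₀ + 1`.
  set m := H (s₀ + 1) - H s₀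
  refine ⟨|m| * s₀, by positivity, fun s hs => ?_⟩
  rcases lt_or_ge s s₀ with hlt | hge
  · have hslope := hH.slope_mono_adjacent hs (by simp only [Set.mem_Ioi]; linarith) hlt
      (lt_add_one s₀)
    rw [add_sub_cancel_left, div_one, div_le_iff₀ (sub_pos.2 hlt)] at hslope
    nlinarith [le_abs_self m, abs_nonneg m, hHs₀ s₀ le_rfl]
  · nlinarith [hHs₀ s hge, abs_nonneg m]

lemma tendsto_mul_comp_div_nhdsGT_zero (hsup : Tendsto (fun s => H s / s) atTop atTop)
    {c : ℝ} (hc : 0 < c) : Tendsto (fun d => H (c / d) * d) (𝓝[>] 0) atTop := by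
  have hcd : Tendsto (fun d : ℝ => c / d) (𝓝[>] 0) atTop := by
    simpa only [div_eq_mul_inv] using tendsto_inv_nhdsGT_zero.const_mul_atTop hc
  refine ((hsup.comp hcd).const_mul_atTop hc).congr' ?_
  filter_upwards [self_mem_nhdsWithin] with d (hd : 0 < d)
  simp only [Function.comp_apply]
  field_simp

lemma ConvexOn.perspective_add_div_two_le (hH : ConvexOn ℝ (Set.Ioi 0) H) {c d₁ d₂ : ℝ}
    (hc : 0 < c) (hd₁ : 0 < d₁) (hd₂ : 0 < d₂) :
    H (c / ((d₁ + d₂) / 2)) * ((d₁ + d₂) / 2) ≤ (H (c / d₁) * d₁ + H (c / d₂) * d₂) / 2 := by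
  set d := (d₁ + d₂) / 2
  have hd : 0 < d := by positivity
  have hconv := hH.2 (Set.mem_Ioi.2 (div_pos hc hd₁)) (Set.mem_Ioi.2 (div_pos hc hd₂))
    (by positivity : 0 ≤ d₁ / (2 * d)) (by positivity : 0 ≤ d₂ / (2 * d))
    (by field_simp; ring)
  have harg : (d₁ / (2 * d)) • (c / d₁) + (d₂ / (2 * d)) • (c / d₂) = c / d := by
    simp only [smul_eq_mul]; field_simp; ring
  rw [harg, smul_eq_mul, smul_eq_mul] at hconv
  calc H (c / d) * d ≤ (d₁ / (2 * d) * H (c / d₁) + d₂ / (2 * d) * H (c / d₂)) * d :=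
        mul_le_mul_of_nonneg_right hconv hd.le
    _ = (H (c / d₁) * d₁ + H (c / d₂) * d₂) / 2 := by field_simp

end ConvexFunctions

lemma sum_Icc_sub_pred (z : ℕ → ℝ) (M : ℕ) : ∑ i ∈ Icc 1 M, (z i - z (i - 1)) = z M - z 0 := by
  induction M with
  | zero => simp
  | succ n ih => rw [sum_Icc_succ_top (by omega), ih]; simp

section NodeSums

variable {M : ℕ} {h : ℝ} {l g l' g' l₁ g₁ l₂ g₂ : ℕ → ℝ}

lemma ipE_congr (hl : ∀ i ≤ M, l i = l' i) (hg : ∀ i ≤ M, g i = g' i) :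
    ipE M h l g = ipE M h l' g' := by
  unfold ipE
  rw [hl 0 (Nat.zero_le _), hg 0 (Nat.zero_le _), hl M le_rfl, hg M le_rfl,
    sum_congr rfl fun i hi => by rw [hl i (mem_Ioo.1 hi).2.le, hg i (mem_Ioo.1 hi).2.le]]

@[fun_prop]
lemma continuous_ipE {α : Type*} [TopologicalSpace α] {l g : α → ℕ → ℝ} (hl : Continuous l)
    (hg : Continuous g) : Continuous fun a => ipE M h (l a) (g a) := by
  unfold ipE; fun_prop

lemma ipE_nonneg (hh : 0 ≤ h) (hlg : ∀ i ≤ M, 0 ≤ l i * g i) : 0 ≤ ipE M h l g := by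
  have := sum_nonneg fun i (hi : i ∈ Ioo 0 M) => hlg i (mem_Ioo.1 hi).2.le
  unfold ipE
  have := hlg 0 (Nat.zero_le _)
  have := hlg M le_rfl
  positivity

lemma mul_le_ipE (hh : 0 ≤ h) (hlg : ∀ i ≤ M, 0 ≤ l i * g i) {i₀ : ℕ} (hi₀ : i₀ ∈ Ioo 0 M) :
    h * (l i₀ * g i₀) ≤ ipE M h l g := by
  have := single_le_sum (fun i (hi : i ∈ Ioo 0 M) => hlg i (mem_Ioo.1 hi).2.le) hi₀
  have := hlg 0 (Nat.zero_le _)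
  have := hlg M le_rfl
  unfold ipE
  gcongr
  linarith

lemma ipE_add_le_avg (hh : 0 ≤ h)
    (hle : ∀ i ≤ M, l i * g i + l' i * g' i ≤ (l₁ i * g₁ i + l₂ i * g₂ i) / 2) :
    ipE M h l g + ipE M h l' g' ≤ (ipE M h l₁ g₁ + ipE M h l₂ g₂) / 2 := by
  have hsum := sum_le_sum fun i (hi : i ∈ Ioo 0 M) => hle i (mem_Ioo.1 hi).2.le
  rw [sum_add_distrib, ← sum_div, sum_add_distrib] at hsum
  have h0 := hle 0 (Nat.zero_le _)
  have hM := hle M le_rfl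
  unfold ipE
  nlinarith

lemma ipE_le_avg (hh : 0 ≤ h) (hle : ∀ i ≤ M, l i * g i ≤ (l₁ i * g₁ i + l₂ i * g₂ i) / 2) :
    ipE M h l g ≤ (ipE M h l₁ g₁ + ipE M h l₂ g₂) / 2 := by
  have := ipE_add_le_avg (l' := fun _ => 0) (g' := fun _ => 0) hh (by simpa using hle)
  simpa [ipE] using this

lemma ipE_add_div_two_right :
    ipE M h l (fun i => (g₁ i + g₂ i) / 2) = (ipE M h l g₁ + ipE M h l g₂) / 2 := by
  simp only [ipE, mul_add, add_div, sum_add_distrib, ← sum_div, mul_div_assoc']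
  ring

end NodeSums

section GridFunctions

variable {M : ℕ} {h X0 XM ε : ℝ} {x z : ℕ → ℝ}

lemma DhOp_add_div_two (x x' : ℕ → ℝ) (i : ℕ) :
    DhOp h (fun j => (x j + x' j) / 2) i = (DhOp h x i + DhOp h x' i) / 2 := by
  simp only [DhOp]; ring

lemma DtOp_pos (hh : 0 < h) (hM : 1 ≤ M) (hx : ∀ i, 1 ≤ i → i ≤ M → x (i - 1) < x i) {i : ℕ}
    (hi : i ≤ M) : 0 < DtOp M h x i := by
  unfold DtOp
  split_ifs with h0 hMi
  · simpa using div_pos (sub_pos.2 (hx 1 le_rfl hM)) hh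
  · exact div_pos (sub_pos.2 (hx M hM le_rfl)) hh
  · have := hx i (by omega) hi
    have := hx (i + 1) (by omega) (by omega)
    simp only [Nat.add_sub_cancel] at this
    exact div_pos (by linarith) (by positivity)

lemma cCoef_pos {f : ℝ → ℝ} {u0 : ℕ → ℝ} (hh : 0 < h) (hM : 1 ≤ M)
    (hf : ∀ s : ℝ, 0 < s → 0 < f s) (hu0 : ∀ i ≤ M, 0 < u0 i)
    (hx : ∀ i, 1 ≤ i → i ≤ M → x (i - 1) < x i) {i : ℕ} (hi : i ≤ M) :
    0 < cCoef M h f u0 x i := by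
  have hD := DtOp_pos hh hM hx hi
  exact div_pos (pow_pos (hu0 i hi) 2) (mul_pos hD (hf _ (div_pos (hu0 i hi) hD)))

/-- Grid functions whose scaled gaps are at least `ε`, frozen to `XM` beyond the last node so
that the set is compact in the product topology of `ℕ → ℝ`. -/
def gapSet (M : ℕ) (h X0 XM ε : ℝ) : Set (ℕ → ℝ) :=
  {v | v 0 = X0 ∧ (∀ i, M ≤ i → v i = XM) ∧ ∀ i, 1 ≤ i → i ≤ M → ε ≤ DhOp h v i}

lemma isCompact_gapSet (hh : 0 < h) (hε : 0 ≤ ε) : IsCompact (gapSet M h X0 XM ε) := by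
  have hclosed : IsClosed (gapSet M h X0 XM ε) := by
    simp only [gapSet, Set.ofPred_and, Set.ofPred_forall]
    refine (isClosed_eq (continuous_apply 0) continuous_const).inter
      ((isClosed_iInter fun i => isClosed_iInter fun _ =>
        isClosed_eq (continuous_apply i) continuous_const).inter
      (isClosed_iInter fun i => isClosed_iInter fun _ => isClosed_iInter fun _ =>
        isClosed_le continuous_const (by unfold DhOp; fun_prop)))
  refine (isCompact_univ_pi fun _ => isCompact_Icc (a := X0) (b := XM)).of_isClosed_subset hclosed
    fun v ⟨h0, htail, hgap⟩ i _ => ?_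
  have hmono : Monotone v := monotone_nat_of_le_succ fun i => by
    rcases lt_or_ge i M with hi | hi
    · have := hgap (i + 1) (by omega) hi
      rw [DhOp, Nat.add_sub_cancel, le_div_iff₀ hh] at this
      nlinarith
    · rw [htail i hi, htail (i + 1) (by omega)]
  exact ⟨h0 ▸ hmono (Nat.zero_le i), htail (i + M) (by omega) ▸ hmono (by omega)⟩

lemma comp_min_mem_gapSet (hz0 : z 0 = X0) (hzM : z M = XM)
    (hgap : ∀ i, 1 ≤ i → i ≤ M → ε ≤ DhOp h z i) :
    (fun i => z (min i M)) ∈ gapSet M h X0 XM ε := by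
  refine ⟨by simpa using hz0, fun i hi => by simpa [min_eq_right hi] using hzM,
    fun i h1 h2 => ?_⟩
  simpa [DhOp, min_eq_left h2, min_eq_left (by omega : i - 1 ≤ M)] using hgap i h1 h2

lemma inQ_of_mem_gapSet (hh : 0 < h) (hε : 0 < ε) (hx : x ∈ gapSet M h X0 XM ε) :
    inQ M X0 XM x := by
  refine ⟨hx.1, hx.2.1 M le_rfl, fun i h1 h2 => ?_⟩
  have := (div_pos_iff_of_pos_right hh).1 (hε.trans_le (hx.2.2 i h1 h2))
  linarith

lemma Continuous.bddBelow_image_inQ {F : (ℕ → ℝ) → ℝ} (hF : Continuous F)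
    (hloc : ∀ z, F (fun i => z (min i M)) = F z) : BddBelow (F '' {z | inQ M X0 XM z}) := by
  obtain ⟨b, hb⟩ := (isCompact_gapSet (M := M) (X0 := X0) (XM := XM) one_pos le_rfl).bddBelow_image
    hF.continuousOn
  refine ⟨b, ?_⟩
  rintro _ ⟨z, hz, rfl⟩
  rw [← hloc z]
  exact hb ⟨_, comp_min_mem_gapSet hz.1 hz.2.1
    fun i h1 h2 => div_nonneg (sub_nonneg.2 (hz.2.2 i h1 h2).le) zero_le_one, rfl⟩

end GridFunctions

section Energy

variable {M : ℕ} {h τ X0 XM : ℝ} {H f Vc Ve Wc We : ℝ → ℝ} {u0 u0half xn x x' z : ℕ → ℝ}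

local notation "J" => Jfun M h τ H f Vc Ve Wc We u0 u0half xn

lemma Shat_congr {K : ℝ → ℝ} (hz : ∀ i ≤ M, x i = z i) {i : ℕ} (hi : i ≤ M) :
    Shat M h K u0 x i = Shat M h K u0 z i :=
  ipE_congr (fun j hj => by rw [hz i hi, hz j hj]) fun _ _ => rfl

lemma Jfun_congr (hz : ∀ i ≤ M, x i = z i) : J x = J z := by
  unfold Jfun
  iterate 5 congr 1
  · exact congrArg _
      (ipE_congr (fun i hi => by simp only [hz i hi]) fun i hi => by simp only [hz i hi])
  · refine congrArg _ (sum_congr rfl fun i hi => ?_)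
    have := mem_Icc.1 hi
    simp only [DhOp, hz i this.2, hz (i - 1) (by omega)]
  · exact ipE_congr (fun _ _ => rfl) fun i hi => by simp only [hz i hi]
  · exact congrArg _ (ipE_congr (fun _ _ => rfl) fun i hi => Shat_congr hz hi)
  · exact ipE_congr (fun _ _ => rfl) hz
  · exact ipE_congr (fun _ _ => rfl) hz

lemma Shat_add_div_two_le (hh : 0 ≤ h) {K : ℝ → ℝ} (hK : ConvexOn ℝ Set.univ K)
    (hu0 : ∀ i ≤ M, 0 ≤ u0 i) (i : ℕ) :
    Shat M h K u0 (fun j => (x j + x' j) / 2) i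
      ≤ (Shat M h K u0 x i + Shat M h K u0 x' i) / 2 :=
  ipE_le_avg hh fun j hj => by
    have := hK.map_add_div_two_le (Set.mem_univ (x i - x j)) (Set.mem_univ (x' i - x' j))
    rw [show (x i + x' i) / 2 - (x j + x' j) / 2 = (x i - x j + (x' i - x' j)) / 2 by ring]
    nlinarith [hu0 j hj]

lemma ENc_add_div_two_le (hh : 0 < h) (hH : ConvexOn ℝ (Set.Ioi 0) H)
    (hVc : ConvexOn ℝ Set.univ Vc) (hWc : ConvexOn ℝ Set.univ Wc) (hu0 : ∀ i ≤ M, 0 ≤ u0 i)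
    (hu0half : ∀ i, 1 ≤ i → i ≤ M → 0 < u0half i)
    (hx : ∀ i, 1 ≤ i → i ≤ M → 0 < DhOp h x i) (hx' : ∀ i, 1 ≤ i → i ≤ M → 0 < DhOp h x' i) :
    ENc M h H Vc Wc u0 u0half (fun i => (x i + x' i) / 2)
      ≤ (ENc M h H Vc Wc u0 u0half x + ENc M h H Vc Wc u0 u0half x') / 2 := by
  have hcell : ∑ i ∈ Icc 1 M, H (u0half i / DhOp h (fun j => (x j + x' j) / 2) i)
        * DhOp h (fun j => (x j + x' j) / 2) i
      ≤ (∑ i ∈ Icc 1 M, H (u0half i / DhOp h x i) * DhOp h x i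
        + ∑ i ∈ Icc 1 M, H (u0half i / DhOp h x' i) * DhOp h x' i) / 2 := by
    rw [← sum_add_distrib, sum_div]
    refine sum_le_sum fun i hi => ?_
    obtain ⟨h1, h2⟩ := mem_Icc.1 hi
    rw [DhOp_add_div_two]
    exact hH.perspective_add_div_two_le (hu0half i h1 h2) (hx i h1 h2) (hx' i h1 h2)
  have hV : ipE M h u0 (fun i => Vc ((x i + x' i) / 2))
      ≤ (ipE M h u0 (fun i => Vc (x i)) + ipE M h u0 (fun i => Vc (x' i))) / 2 :=
    ipE_le_avg hh.le fun i hi => by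
      nlinarith [hVc.map_add_div_two_le (Set.mem_univ (x i)) (Set.mem_univ (x' i)), hu0 i hi]
  have hW : ipE M h u0 (fun i => Shat M h Wc u0 (fun j => (x j + x' j) / 2) i)
      ≤ (ipE M h u0 (fun i => Shat M h Wc u0 x i)
        + ipE M h u0 (fun i => Shat M h Wc u0 x' i)) / 2 :=
    ipE_le_avg hh.le fun i hi => by
      nlinarith [Shat_add_div_two_le (x := x) (x' := x') hh.le hWc hu0 i, hu0 i hi]
  unfold ENc
  nlinarith [mul_le_mul_of_nonneg_left hcell hh.le]

lemma Jfun_add_div_two_le (hh : 0 < h) (hτ : 0 < τ) (hH : ConvexOn ℝ (Set.Ioi 0) H)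
    (hVc : ConvexOn ℝ Set.univ Vc) (hWc : ConvexOn ℝ Set.univ Wc) (hu0 : ∀ i ≤ M, 0 ≤ u0 i)
    (hu0half : ∀ i, 1 ≤ i → i ≤ M → 0 < u0half i) (hc : ∀ i ≤ M, 0 ≤ cCoef M h f u0 xn i)
    (hx : ∀ i, 1 ≤ i → i ≤ M → 0 < DhOp h x i) (hx' : ∀ i, 1 ≤ i → i ≤ M → 0 < DhOp h x' i)
    {i₀ : ℕ} (hi₀ : i₀ ∈ Ioo 0 M) :
    J (fun i => (x i + x' i) / 2) + h * (cCoef M h f u0 xn i₀ * ((x i₀ - x' i₀) / 2) ^ 2) / (2 * τ)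
      ≤ (J x + J x') / 2 := by
  set c := cCoef M h f u0 xn
  -- parallelogram identity for the quadratic term
  have hq := ipE_add_le_avg (M := M) (h := h)
    (l := fun i => c i * ((x i + x' i) / 2 - xn i)) (g := fun i => (x i + x' i) / 2 - xn i)
    (l' := fun i => c i * ((x i - x' i) / 2)) (g' := fun i => (x i - x' i) / 2)
    (l₁ := fun i => c i * (x i - xn i)) (g₁ := fun i => x i - xn i)
    (l₂ := fun i => c i * (x' i - xn i)) (g₂ := fun i => x' i - xn i)
    hh.le fun i _ => le_of_eq (by ring)
  have hi₀le := mul_le_ipE hh.le (l := fun i => c i * ((x i - x' i) / 2))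
    (g := fun i => (x i - x' i) / 2)
    (fun i hi => by rw [mul_assoc]; exact mul_nonneg (hc i hi) (mul_self_nonneg _)) hi₀
  have hE := ENc_add_div_two_le hh hH hVc hWc hu0 hu0half hx hx'
  have hτ' : 0 ≤ 1 / (2 * τ) := by positivity
  unfold ENc at hE
  unfold Jfun
  rw [ipE_add_div_two_right, ipE_add_div_two_right]
  have := mul_le_mul_of_nonneg_left hq hτ'
  have := mul_le_mul_of_nonneg_left hi₀le hτ'
  have : h * (c i₀ * ((x i₀ - x' i₀) / 2) ^ 2) / (2 * τ)
      = 1 / (2 * τ) * (h * (c i₀ * ((x i₀ - x' i₀) / 2) * ((x i₀ - x' i₀) / 2))) := by ring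
  linarith

lemma continuousOn_Jfun (hH : ContinuousOn H (Set.Ioi 0)) (hVc : Continuous Vc)
    (hWc : Continuous Wc) (hu0half : ∀ i, 1 ≤ i → i ≤ M → 0 < u0half i) :
    ContinuousOn J {z | ∀ i, 1 ≤ i → i ≤ M → 0 < DhOp h z i} := by
  set U := {z : ℕ → ℝ | ∀ i, 1 ≤ i → i ≤ M → 0 < DhOp h z i}
  have hcell : ∀ i ∈ Icc 1 M, ContinuousOn (fun z => H (u0half i / DhOp h z i) * DhOp h z i) U := by
    intro i hi
    obtain ⟨h1, h2⟩ := mem_Icc.1 hi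
    have hD : Continuous fun z : ℕ → ℝ => DhOp h z i := by unfold DhOp; fun_prop
    have hDpos : ∀ z ∈ U, 0 < DhOp h z i := fun z hz => hz i h1 h2
    exact (hH.comp (continuousOn_const.div hD.continuousOn fun z hz => (hDpos z hz).ne')
      fun z hz => div_pos (hu0half i h1 h2) (hDpos z hz)).mul hD.continuousOn
  unfold Jfun
  simp only [Shat]
  refine ((((?_ : ContinuousOn _ U).add
    (continuousOn_const.mul (continuousOn_finsetSum _ hcell))).add ?_).add ?_).sub ?_ |>.sub ?_ <;>
    exact Continuous.continuousOn (by fun_prop)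

lemma mul_cell_sub_le_cellSum (hh : 0 < h) {C : ℝ} (hC : 0 ≤ C) (hHC : ∀ s, 0 < s → -C ≤ H s)
    (hu0half : ∀ i, 1 ≤ i → i ≤ M → 0 < u0half i) (hz : ∀ i, 1 ≤ i → i ≤ M → 0 < DhOp h z i)
    {i : ℕ} (hi : i ∈ Icc 1 M) :
    h * (H (u0half i / DhOp h z i) * DhOp h z i) - C * (z M - z 0)
      ≤ h * ∑ j ∈ Icc 1 M, H (u0half j / DhOp h z j) * DhOp h z j := by
  have hterm : ∀ j ∈ Icc 1 M, 0 ≤ H (u0half j / DhOp h z j) * DhOp h z j + C * DhOp h z j := by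
    intro j hj
    obtain ⟨h1, h2⟩ := mem_Icc.1 hj
    have := hHC _ (div_pos (hu0half j h1 h2) (hz j h1 h2))
    nlinarith [hz j h1 h2]
  have hsingle := single_le_sum hterm hi
  rw [sum_add_distrib, ← mul_sum] at hsingle
  have htel : h * ∑ j ∈ Icc 1 M, DhOp h z j = z M - z 0 := by
    simp only [DhOp, ← sum_div, sum_Icc_sub_pred]
    field_simp
  obtain ⟨h1, h2⟩ := mem_Icc.1 hi
  nlinarith [mul_le_mul_of_nonneg_left hsingle hh.le, mul_nonneg hC (hz i h1 h2).le]

lemma exists_cell_sub_le_Jfun (hh : 0 < h) (hτ : 0 < τ) (hH : ConvexOn ℝ (Set.Ioi 0) H)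
    (hsup : Tendsto (fun s => H s / s) atTop atTop) (hVc : Continuous Vc) (hWc : Continuous Wc)
    (hu0half : ∀ i, 1 ≤ i → i ≤ M → 0 < u0half i) (hc : ∀ i ≤ M, 0 ≤ cCoef M h f u0 xn i) :
    ∃ C, ∀ z, inQ M X0 XM z → ∀ i ∈ Icc 1 M,
      h * (H (u0half i / DhOp h z i) * DhOp h z i) - C ≤ J z := by
  obtain ⟨C₁, hC₁, hHC₁⟩ := hH.exists_neg_le_of_tendsto_div_atTop hsup
  obtain ⟨C₂, hC₂⟩ := Continuous.bddBelow_image_inQ (M := M) (X0 := X0) (XM := XM)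
    (F := fun z => ipE M h u0 (fun i => Vc (z i)) + 1 / 2 * ipE M h u0 (fun i => Shat M h Wc u0 z i)
      - ipE M h (fun i => u0 i * deriv Ve (xn i)) z
      - ipE M h (fun i => u0 i * Shat M h (deriv We) u0 xn i) z)
    (by simp only [Shat]; fun_prop) fun z => by
      have hz : ∀ i ≤ M, z (min i M) = z i := fun i hi => by rw [min_eq_left hi]
      simp only [ipE_congr (fun _ _ => rfl) fun i hi => congrArg Vc (hz i hi),
        ipE_congr (fun _ _ => rfl) fun i hi => Shat_congr (K := Wc) (u0 := u0) (h := h) hz hi,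
        ipE_congr (fun _ _ => rfl) hz]
  refine ⟨C₁ * (XM - X0) - C₂, fun z hz i hi => ?_⟩
  have hD : ∀ i, 1 ≤ i → i ≤ M → 0 < DhOp h z i := fun i h1 h2 =>
    div_pos (sub_pos.2 (hz.2.2 i h1 h2)) hh
  have hcell := mul_cell_sub_le_cellSum hh hC₁ hHC₁ hu0half hD hi
  have hq := ipE_nonneg (M := M) (l := fun i => cCoef M h f u0 xn i * (z i - xn i))
    (g := fun i => z i - xn i) hh.le fun i hi => by
      rw [mul_assoc]; exact mul_nonneg (hc i hi) (mul_self_nonneg _)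
  have := hC₂ (Set.mem_image_of_mem _ hz)
  rw [hz.1, hz.2.1] at hcell
  unfold Jfun
  nlinarith [mul_nonneg (by positivity : (0 : ℝ) ≤ 1 / (2 * τ)) hq]

lemma exists_le_DhOp_of_Jfun_le (hh : 0 < h) (hτ : 0 < τ) (hH : ConvexOn ℝ (Set.Ioi 0) H)
    (hsup : Tendsto (fun s => H s / s) atTop atTop) (hVc : Continuous Vc) (hWc : Continuous Wc)
    (hu0half : ∀ i, 1 ≤ i → i ≤ M → 0 < u0half i) (hc : ∀ i ≤ M, 0 ≤ cCoef M h f u0 xn i)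
    (A : ℝ) : ∃ ε > 0, ∀ z, inQ M X0 XM z → J z ≤ A → ∀ i, 1 ≤ i → i ≤ M → ε ≤ DhOp h z i := by
  obtain ⟨C, hC⟩ := exists_cell_sub_le_Jfun (X0 := X0) (XM := XM) (Ve := Ve) (We := We)
    hh hτ hH hsup hVc hWc hu0half hc
  have hev : ∀ᶠ D in 𝓝[>] 0, ∀ i ∈ Icc 1 M, A + C < h * (H (u0half i / D) * D) :=
    (eventually_all_finset _).2 fun i hi =>
      ((tendsto_mul_comp_div_nhdsGT_zero hsup (hu0half i (mem_Icc.1 hi).1 (mem_Icc.1 hi).2)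
        ).const_mul_atTop hh).eventually_gt_atTop _
  obtain ⟨ε, hε, hsub⟩ := mem_nhdsGT_iff_exists_Ioo_subset.1 hev
  refine ⟨ε, hε, fun z hz hJ i h1 h2 => not_lt.1 fun hlt => ?_⟩
  have hDi : DhOp h z i ∈ Set.Ioo 0 ε := ⟨div_pos (sub_pos.2 (hz.2.2 i h1 h2)) hh, hlt⟩
  have := hsub hDi i (mem_Icc.2 ⟨h1, h2⟩)
  linarith [hC z hz i (mem_Icc.2 ⟨h1, h2⟩)]

lemma exists_forall_Jfun_le (hh : 0 < h) (hτ : 0 < τ) (hH : ConvexOn ℝ (Set.Ioi 0) H)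
    (hsup : Tendsto (fun s => H s / s) atTop atTop) (hVc : Continuous Vc) (hWc : Continuous Wc)
    (hu0half : ∀ i, 1 ≤ i → i ≤ M → 0 < u0half i) (hc : ∀ i ≤ M, 0 ≤ cCoef M h f u0 xn i)
    (hxn : inQ M X0 XM xn) : ∃ x, inQ M X0 XM x ∧ ∀ z, inQ M X0 XM z → J x ≤ J z := by
  obtain ⟨ε, hε, hgap⟩ :=
    exists_le_DhOp_of_Jfun_le (X0 := X0) (XM := XM) hh hτ hH hsup hVc hWc hu0half hc (J xn)
  have htrunc : ∀ z, inQ M X0 XM z → J z ≤ J xn →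
      (fun i => z (min i M)) ∈ gapSet M h X0 XM ε ∧ J (fun i => z (min i M)) = J z :=
    fun z hz hJ => ⟨comp_min_mem_gapSet hz.1 hz.2.1 (hgap z hz hJ),
      Jfun_congr fun i hi => by rw [min_eq_left hi]⟩
  have hcont : ContinuousOn J (gapSet M h X0 XM ε) :=
    (continuousOn_Jfun (by simpa using hH.continuousOn_interior) hVc hWc hu0half).mono
      fun v hv i h1 h2 => hε.trans_le (hv.2.2 i h1 h2)
  have hxn' := htrunc xn hxn le_rfl
  obtain ⟨x, hxK, hxmin⟩ := (isCompact_gapSet hh hε.le).exists_isMinOn ⟨_, hxn'.1⟩ hcont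
  refine ⟨x, inQ_of_mem_gapSet hh hε hxK, fun z hz => ?_⟩
  rcases le_or_gt (J z) (J xn) with hle | hlt
  · obtain ⟨hzK, hJz⟩ := htrunc z hz hle
    exact hJz ▸ hxmin hzK
  · exact (hxn'.2 ▸ hxmin hxn'.1 : J x ≤ J xn).trans hlt.le

lemma eq_of_forall_Jfun_le (hh : 0 < h) (hτ : 0 < τ) (hH : ConvexOn ℝ (Set.Ioi 0) H)
    (hVc : ConvexOn ℝ Set.univ Vc) (hWc : ConvexOn ℝ Set.univ Wc) (hu0 : ∀ i ≤ M, 0 ≤ u0 i)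
    (hu0half : ∀ i, 1 ≤ i → i ≤ M → 0 < u0half i) (hc : ∀ i ≤ M, 0 < cCoef M h f u0 xn i)
    (hx : inQ M X0 XM x) (hx' : inQ M X0 XM x') (hmin : ∀ z, inQ M X0 XM z → J x ≤ J z)
    (hmin' : ∀ z, inQ M X0 XM z → J x' ≤ J z) : ∀ i ≤ M, x' i = x i := by
  intro i hi
  by_contra hne
  have hi₀ : i ∈ Ioo 0 M := mem_Ioo.2 ⟨Nat.pos_of_ne_zero fun h0 => hne (by rw [h0, hx.1, hx'.1]),
    hi.lt_of_ne fun hM => hne (by rw [hM, hx.2.1, hx'.2.1])⟩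
  have hmid : inQ M X0 XM fun j => (x j + x' j) / 2 :=
    ⟨by simp [hx.1, hx'.1], by simp [hx.2.1, hx'.2.1],
      fun j h1 h2 => by linarith [hx.2.2 j h1 h2, hx'.2.2 j h1 h2]⟩
  have hD : ∀ y, inQ M X0 XM y → ∀ j, 1 ≤ j → j ≤ M → 0 < DhOp h y j :=
    fun y hy j h1 h2 => div_pos (sub_pos.2 (hy.2.2 j h1 h2)) hh
  have hstrict := Jfun_add_div_two_le (Ve := Ve) (We := We) hh hτ hH hVc hWc hu0 hu0half
    (fun j hj => (hc j hj).le) (hD x hx) (hD x' hx') hi₀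
  have hslack : 0 < h * (cCoef M h f u0 xn i * ((x i - x' i) / 2) ^ 2) / (2 * τ) := by
    have := hc i hi
    have : (x i - x' i) / 2 ≠ 0 := div_ne_zero (sub_ne_zero.2 (Ne.symm hne)) two_ne_zero
    positivity
  linarith [hmin _ hmid, hmin' x hx]

lemma tendsto_Jfun_atTop_of_tendsto_not_inQ (hh : 0 < h) (hτ : 0 < τ)
    (hH : ConvexOn ℝ (Set.Ioi 0) H) (hsup : Tendsto (fun s => H s / s) atTop atTop)
    (hVc : Continuous Vc) (hWc : Continuous Wc) (hu0half : ∀ i, 1 ≤ i → i ≤ M → 0 < u0half i)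
    (hc : ∀ i ≤ M, 0 ≤ cCoef M h f u0 xn i) {z : ℕ → ℕ → ℝ} (hz : ∀ k, inQ M X0 XM (z k))
    {y : ℕ → ℝ} (hy : inQbar M X0 XM y) (hyQ : ¬inQ M X0 XM y)
    (hzy : ∀ i ≤ M, Tendsto (fun k => z k i) atTop (𝓝 (y i))) :
    Tendsto (fun k => J (z k)) atTop atTop := by
  obtain ⟨i, h1, h2, hyi⟩ : ∃ i, 1 ≤ i ∧ i ≤ M ∧ y (i - 1) = y i := by
    by_contra! hne
    exact hyQ ⟨hy.1, hy.2.1, fun i h1 h2 => (hy.2.2 i h1 h2).lt_of_ne (hne i h1 h2)⟩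
  have hD : Tendsto (fun k => DhOp h (z k) i) atTop (𝓝 0) := by
    simpa [DhOp, hyi] using ((hzy i h2).sub (hzy (i - 1) (by omega))).div_const h
  refine tendsto_atTop.2 fun A => ?_
  obtain ⟨ε, hε, hgap⟩ :=
    exists_le_DhOp_of_Jfun_le (X0 := X0) (XM := XM) hh hτ hH hsup hVc hWc hu0half hc A
  filter_upwards [hD.eventually (gt_mem_nhds hε)] with k hk
  by_contra! hJ
  exact (hgap (z k) (hz k) hJ.le i h1 h2).not_gt hk

end Energy

theorem Jfun_coercive_and_unique_minimizer_general
    (M : ℕ) (hM : 2 ≤ M) (X0 XM : ℝ) (hX : X0 < XM)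
    (h : ℝ) (hh : h = (XM - X0) / (M : ℝ)) (τ : ℝ) (hτ : 0 < τ)
    (H f Vc Ve Wc We : ℝ → ℝ)
    (hHconv : ConvexOn ℝ (Set.Ioi 0) H)
    (hf : ∀ s : ℝ, 0 < s → 0 < f s)
    (hVcconv : ConvexOn ℝ Set.univ Vc)
    (hWcconv : ConvexOn ℝ Set.univ Wc)
    (u0 u0half : ℕ → ℝ)
    (hu0 : ∀ i ≤ M, 0 < u0 i)
    (hu0half : ∀ i, 1 ≤ i → i ≤ M → 0 < u0half i)
    (hHsup : Tendsto (fun s => H s / s) atTop atTop)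
    (xn : ℕ → ℝ) (hxn : inQ M X0 XM xn) :
    (∀ z : ℕ → ℕ → ℝ, (∀ k, inQ M X0 XM (z k)) →
      ∀ y : ℕ → ℝ, inQbar M X0 XM y → ¬inQ M X0 XM y →
        (∀ i ≤ M, Tendsto (fun k => z k i) atTop (nhds (y i))) →
        Tendsto (fun k => Jfun M h τ H f Vc Ve Wc We u0 u0half xn (z k)) atTop atTop)
    ∧ ∃ x : ℕ → ℝ, inQ M X0 XM x
        ∧ (∀ z : ℕ → ℝ, inQ M X0 XM z →
            Jfun M h τ H f Vc Ve Wc We u0 u0half xn x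
              ≤ Jfun M h τ H f Vc Ve Wc We u0 u0half xn z)
        ∧ ∀ x' : ℕ → ℝ, inQ M X0 XM x' →
            (∀ z : ℕ → ℝ, inQ M X0 XM z →
              Jfun M h τ H f Vc Ve Wc We u0 u0half xn x'
                ≤ Jfun M h τ H f Vc Ve Wc We u0 u0half xn z) →
            ∀ i ≤ M, x' i = x i := by
  have hh₀ : 0 < h := hh ▸ div_pos (sub_pos.2 hX) (by positivity)
  have hVc : Continuous Vc := by simpa using hVcconv.continuousOn_interior
  have hWc : Continuous Wc := by simpa using hWcconv.continuousOn_interior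
  have hc : ∀ i ≤ M, 0 < cCoef M h f u0 xn i :=
    fun i hi => cCoef_pos hh₀ (by omega) hf hu0 hxn.2.2 hi
  have hc₀ : ∀ i ≤ M, 0 ≤ cCoef M h f u0 xn i := fun i hi => (hc i hi).le
  obtain ⟨x, hx, hmin⟩ :=
    exists_forall_Jfun_le hh₀ hτ hHconv hHsup hVc hWc hu0half hc₀ hxn
  exact ⟨fun z hz y hy hyQ hzy => tendsto_Jfun_atTop_of_tendsto_not_inQ hh₀ hτ hHconv hHsup
      hVc hWc hu0half hc₀ hz hy hyQ hzy,
    x, hx, hmin, fun x' hx' hmin' => eq_of_forall_Jfun_le hh₀ hτ hHconv hVcconv hWcconv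
      (fun i hi => (hu0 i hi).le) hu0half hc hx hx' hmin hmin'⟩

/-- If `H` is superlinear then (i) `J` blows up along sequences in `Q` converging to a
point of `Q̄ \ Q`, and (ii) `J` attains its infimum over `Q` at a unique point. -/
theorem Jfun_coercive_and_unique_minimizer
    (M : ℕ) (hM : 2 ≤ M) (X0 XM : ℝ) (hX : X0 < XM)
    (h : ℝ) (hh : h = (XM - X0) / (M : ℝ)) (τ : ℝ) (hτ : 0 < τ)
    (H f Vc Ve Wc We : ℝ → ℝ)
    (hHconv : ConvexOn ℝ (Set.Ioi 0) H) (hHreg : ContDiffOn ℝ 1 H (Set.Ioi 0))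
    (hf : ∀ s : ℝ, 0 < s → 0 < f s)
    (hVcconv : ConvexOn ℝ Set.univ Vc) (hVcreg : ContDiff ℝ 1 Vc)
    (hVeconv : ConvexOn ℝ Set.univ Ve) (hVereg : ContDiff ℝ 1 Ve)
    (hWcconv : ConvexOn ℝ Set.univ Wc) (hWcreg : ContDiff ℝ 1 Wc)
    (hWeconv : ConvexOn ℝ Set.univ We) (hWereg : ContDiff ℝ 1 We)
    (hWceven : ∀ s : ℝ, Wc (-s) = Wc s) (hWeeven : ∀ s : ℝ, We (-s) = We s)
    (u0 u0half : ℕ → ℝ)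
    (hu0 : ∀ i ≤ M, 0 < u0 i)
    (hu0half : ∀ i, 1 ≤ i → i ≤ M → 0 < u0half i)
    (hHsup : Tendsto (fun s => H s / s) atTop atTop)
    (xn : ℕ → ℝ) (hxn : inQ M X0 XM xn) :
    (∀ z : ℕ → ℕ → ℝ, (∀ k, inQ M X0 XM (z k)) →
      ∀ y : ℕ → ℝ, inQbar M X0 XM y → ¬inQ M X0 XM y →
        (∀ i ≤ M, Tendsto (fun k => z k i) atTop (nhds (y i))) →
        Tendsto (fun k => Jfun M h τ H f Vc Ve Wc We u0 u0half xn (z k)) atTop atTop)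
    ∧ ∃ x : ℕ → ℝ, inQ M X0 XM x
        ∧ (∀ z : ℕ → ℝ, inQ M X0 XM z →
            Jfun M h τ H f Vc Ve Wc We u0 u0half xn x
              ≤ Jfun M h τ H f Vc Ve Wc We u0 u0half xn z)
        ∧ ∀ x' : ℕ → ℝ, inQ M X0 XM x' →
            (∀ z : ℕ → ℝ, inQ M X0 XM z →
              Jfun M h τ H f Vc Ve Wc We u0 u0half xn x'
                ≤ Jfun M h τ H f Vc Ve Wc We u0 u0half xn z) →
            ∀ i ≤ M, x' i = x i :=
  Jfun_coercive_and_unique_minimizer_general M hM X0 XM hX h hh τ hτ H f Vc Ve Wc We hHconv hf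
    hVcconv hWcconv u0 u0half hu0 hu0half hHsup xn hxn
end
end

section
/- Define E_{N,c}(x) = h Σ_{i=1}^{M} H(u_{0,i−1/2}/(D_h x)_{i−1/2})·(D_h x)_{i−1/2} + ⟨u₀, V_c∘x⟩_E + (1/2)⟨u₀, w_c[x]⟩_E for x ∈ Q, and E_{N,e}(x) = ⟨u₀, V_e∘x⟩_E + (1/2)⟨u₀, w_e[x]⟩_E for x ∈ ℝ^{M+1}, where (V_c∘x)_i = V_c(x_i) and (V_e∘x)_i = V_e(x_i). Then E_{N,c} is convex on the convex set Q and E_{N,e} is convex on ℝ^{M+1}; consequently the discrete total energy E_N = E_{N,c} − E_{N,e} is a difference of two convex functionals of the trajectory x. -/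
open Finset Filter

noncomputable section

/-! Each piece of `E_{N,c}` and `E_{N,e}` is a nonnegative combination of convex functions
composed with linear maps of the trajectory: `x ↦ x_i`, `x ↦ x_i - x_j`, and `x ↦ (D_h x)_{i-1/2}`.
The only non-obvious piece is the internal energy, where `s ↦ H(c/s)·s` is the perspective of
the convex function `H`; it is convex on `s > 0`, which is where `D_h` maps `Q` when `h > 0`. -/

section ConvexityTools

variable {E : Type*} [AddCommGroup E] [Module ℝ E] {s : Set E}

lemma ConvexOn.sum {ι : Type*} {t : Finset ι} {f : ι → E → ℝ} (hs : Convex ℝ s)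
    (hf : ∀ i ∈ t, ConvexOn ℝ s (f i)) : ConvexOn ℝ s (fun x => ∑ i ∈ t, f i x) := by
  simpa only [← Finset.sum_fn] using
    Finset.sum_induction f (ConvexOn ℝ s) (fun _ _ => ConvexOn.add) (convexOn_const 0 hs) hf

lemma ConvexOn.comp_isLinearMap {F : Type*} [AddCommGroup F] [Module ℝ F] {t : Set F}
    {f : F → ℝ} {g : E → F} (hf : ConvexOn ℝ t f) (hg : IsLinearMap ℝ g) (hs : Convex ℝ s)
    (hst : Set.MapsTo g s t) : ConvexOn ℝ s (f ∘ g) :=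
  (hf.comp_linearMap (IsLinearMap.mk' g hg)).subset hst hs

lemma ConvexOn.perspective {H : ℝ → ℝ} (hH : ConvexOn ℝ (Set.Ioi 0) H) {c : ℝ} (hc : 0 < c) :
    ConvexOn ℝ (Set.Ioi 0) (fun s => H (c / s) * s) := by
  refine ⟨convex_Ioi 0, fun s (hs : 0 < s) t (ht : 0 < t) a b ha hb hab => ?_⟩
  have hu : 0 < a * s + b * t := convex_Ioi (0 : ℝ) hs ht ha hb hab
  have hweights : a * s / (a * s + b * t) + b * t / (a * s + b * t) = 1 := by field_simp
  have hcombo : (a * s / (a * s + b * t)) • (c / s) + (b * t / (a * s + b * t)) • (c / t)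
      = c / (a * s + b * t) := by
    simp only [smul_eq_mul]; field_simp; linear_combination hab
  have hJensen := hH.2 (div_pos hc hs) (div_pos hc ht) (by positivity) (by positivity) hweights
  rw [hcombo] at hJensen
  calc H (c / (a • s + b • t)) * (a • s + b • t)
      ≤ ((a * s / (a * s + b * t)) • H (c / s) + (b * t / (a * s + b * t)) • H (c / t))
          * (a * s + b * t) := mul_le_mul_of_nonneg_right hJensen hu.le
    _ = a • (H (c / s) * s) + b • (H (c / t) * t) := by simp only [smul_eq_mul]; field_simp

end ConvexityTools

section DiscreteEnergy

variable {E : Type*} [AddCommGroup E] [Module ℝ E] {s : Set E} {M : ℕ} {h : ℝ}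

lemma convexOn_ipE {w : ℕ → ℝ} {g : E → ℕ → ℝ} (hh : 0 ≤ h) (hw : ∀ i ≤ M, 0 ≤ w i)
    (hs : Convex ℝ s) (hg : ∀ i ≤ M, ConvexOn ℝ s (fun x => g x i)) :
    ConvexOn ℝ s (fun x => ipE M h w (g x)) := by
  have hsplit : (fun x => ipE M h w (g x)) = fun x => h • ((w 0 / 2) • g x 0
      + ∑ i ∈ Finset.Ioo 0 M, w i • g x i + (w M / 2) • g x M) := by
    funext x; simp only [ipE, smul_eq_mul]; ring
  rw [hsplit]
  refine ((((hg 0 M.zero_le).smul ?_).add (ConvexOn.sum hs fun i hi => ?_)).add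
    ((hg M le_rfl).smul ?_)).smul hh
  · linarith [hw 0 M.zero_le]
  · have hiM := (Finset.mem_Ioo.mp hi).2.le
    exact (hg i hiM).smul (hw i hiM)
  · linarith [hw M le_rfl]

lemma ipE_comm (l g : ℕ → ℝ) : ipE M h l g = ipE M h g l := by
  simp only [ipE, mul_comm]

lemma convexOn_Shat {W : ℝ → ℝ} {u0 : ℕ → ℝ} (hW : ConvexOn ℝ Set.univ W) (hh : 0 ≤ h)
    (hu0 : ∀ i ≤ M, 0 ≤ u0 i) (i : ℕ) :
    ConvexOn ℝ Set.univ (fun x => Shat M h W u0 x i) := by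
  simp only [Shat, ipE_comm _ u0]
  refine convexOn_ipE hh hu0 convex_univ fun j _ => ?_
  exact hW.comp_isLinearMap (g := fun x : ℕ → ℝ => x i - x j)
    ⟨fun x y => by simp only [Pi.add_apply]; ring,
      fun c x => by simp only [Pi.smul_apply, smul_eq_mul]; ring⟩ convex_univ (Set.mapsTo_univ _ _)

lemma convexOn_ENe {V W : ℝ → ℝ} {u0 : ℕ → ℝ} (hV : ConvexOn ℝ Set.univ V)
    (hW : ConvexOn ℝ Set.univ W) (hh : 0 ≤ h) (hu0 : ∀ i ≤ M, 0 ≤ u0 i) :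
    ConvexOn ℝ Set.univ (ENe M h V W u0) := by
  refine (convexOn_ipE hh hu0 convex_univ fun i _ => ?_).add
    ((convexOn_ipE hh hu0 convex_univ fun i _ => convexOn_Shat hW hh hu0 i).smul
      (by norm_num : (0 : ℝ) ≤ 1 / 2))
  exact hV.comp_isLinearMap (g := fun x : ℕ → ℝ => x i) (LinearMap.proj i).isLinear
    convex_univ (Set.mapsTo_univ _ _)

lemma DhOp_isLinearMap (i : ℕ) : IsLinearMap ℝ (fun x => DhOp h x i) :=
  ⟨fun x y => by simp only [DhOp, Pi.add_apply]; ring,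
    fun c x => by simp only [DhOp, Pi.smul_apply, smul_eq_mul]; ring⟩

lemma DhOp_pos_of_inQ {X0 XM : ℝ} {x : ℕ → ℝ} (hh : 0 < h) (hx : inQ M X0 XM x) {i : ℕ}
    (hi1 : 1 ≤ i) (hiM : i ≤ M) : 0 < DhOp h x i :=
  div_pos (sub_pos.mpr (hx.2.2 i hi1 hiM)) hh

lemma convex_inQ (X0 XM : ℝ) : Convex ℝ {l : ℕ → ℝ | inQ M X0 XM l} := by
  rintro x ⟨hx0, hxM, hx⟩ y ⟨hy0, hyM, hy⟩ a b ha hb hab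
  refine ⟨?_, ?_, fun i hi1 hiM => ?_⟩
  · simpa [hx0, hy0] using Convex.combo_self hab X0
  · simpa [hxM, hyM] using Convex.combo_self hab XM
  · have := convex_Ioi (0 : ℝ) (sub_pos.mpr (hx i hi1 hiM)) (sub_pos.mpr (hy i hi1 hiM)) ha hb hab
    simp only [Set.mem_Ioi, smul_eq_mul] at this
    simp only [Pi.add_apply, Pi.smul_apply, smul_eq_mul]
    linarith

lemma convexOn_internalEnergy {X0 XM : ℝ} {H : ℝ → ℝ} {u0half : ℕ → ℝ} (hh : 0 < h)
    (hH : ConvexOn ℝ (Set.Ioi 0) H) (hu0half : ∀ i, 1 ≤ i → i ≤ M → 0 < u0half i) :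
    ConvexOn ℝ {l : ℕ → ℝ | inQ M X0 XM l}
      (fun x => h * ∑ i ∈ Finset.Icc 1 M, H (u0half i / DhOp h x i) * DhOp h x i) := by
  refine ConvexOn.smul hh.le (ConvexOn.sum (convex_inQ X0 XM) fun i hi => ?_)
  obtain ⟨hi1, hiM⟩ := Finset.mem_Icc.mp hi
  exact (hH.perspective (hu0half i hi1 hiM)).comp_isLinearMap (DhOp_isLinearMap i)
    (convex_inQ X0 XM) fun x hx => DhOp_pos_of_inQ hh hx hi1 hiM

lemma ENc_eq_add_ENe (H Vc Wc : ℝ → ℝ) (u0 u0half x : ℕ → ℝ) :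
    ENc M h H Vc Wc u0 u0half x
      = h * ∑ i ∈ Finset.Icc 1 M, H (u0half i / DhOp h x i) * DhOp h x i
        + ENe M h Vc Wc u0 x := by
  simp only [ENc, ENe, add_assoc]

lemma ipE_sub (l g g' : ℕ → ℝ) :
    ipE M h l (fun i => g i - g' i) = ipE M h l g - ipE M h l g' := by
  simp only [ipE, mul_sub, Finset.sum_sub_distrib]
  ring

lemma Shat_sub (W W' : ℝ → ℝ) (u0 x : ℕ → ℝ) (i : ℕ) :
    Shat M h (fun s => W s - W' s) u0 x i = Shat M h W u0 x i - Shat M h W' u0 x i := by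
  simp only [Shat, ipE_comm _ u0, ipE_sub]

lemma EN_sub_eq_ENc_sub_ENe (H Vc Ve Wc We : ℝ → ℝ) (u0 u0half x : ℕ → ℝ) :
    EN M h H (fun s => Vc s - Ve s) (fun s => Wc s - We s) u0 u0half x
      = ENc M h H Vc Wc u0 u0half x - ENe M h Ve We u0 x := by
  simp only [EN, ENc, ENe, Shat_sub, ipE_sub]
  ring

end DiscreteEnergy

theorem discrete_energy_convex_splitting_general
    (M : ℕ) (hM : 2 ≤ M) (X0 XM : ℝ) (hX : X0 < XM)
    (h : ℝ) (hh : h = (XM - X0) / (M : ℝ))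
    (H Vc Ve Wc We : ℝ → ℝ)
    (hHconv : ConvexOn ℝ (Set.Ioi 0) H)
    (hVcconv : ConvexOn ℝ Set.univ Vc)
    (hVeconv : ConvexOn ℝ Set.univ Ve)
    (hWcconv : ConvexOn ℝ Set.univ Wc)
    (hWeconv : ConvexOn ℝ Set.univ We)
    (u0 u0half : ℕ → ℝ)
    (hu0 : ∀ i ≤ M, 0 < u0 i)
    (hu0half : ∀ i, 1 ≤ i → i ≤ M → 0 < u0half i)
 :
    ConvexOn ℝ {l : ℕ → ℝ | inQ M X0 XM l} (ENc M h H Vc Wc u0 u0half)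
    ∧ ConvexOn ℝ Set.univ (ENe M h Ve We u0)
    ∧ ∀ x : ℕ → ℝ,
        EN M h H (fun s => Vc s - Ve s) (fun s => Wc s - We s) u0 u0half x
          = ENc M h H Vc Wc u0 u0half x - ENe M h Ve We u0 x := by
  have hpos : 0 < h := hh ▸ div_pos (sub_pos.mpr hX) (by exact_mod_cast (by omega : 0 < M))
  have hu0' : ∀ i ≤ M, 0 ≤ u0 i := fun i hi => (hu0 i hi).le
  refine ⟨?_, convexOn_ENe hVeconv hWeconv hpos.le hu0',
    EN_sub_eq_ENc_sub_ENe H Vc Ve Wc We u0 u0half⟩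
  have hsplit := (convexOn_internalEnergy (X0 := X0) (XM := XM) hpos hHconv hu0half).add
    ((convexOn_ENe hVcconv hWcconv hpos.le hu0').subset (Set.subset_univ _) (convex_inQ X0 XM))
  exact hsplit.congr fun x _ => (ENc_eq_add_ENe H Vc Wc u0 u0half x).symm

/-- `E_{N,c}` is convex on `Q`, `E_{N,e}` is convex on all of `ℝ^{M+1}`, and
`E_N = E_{N,c} - E_{N,e}`. -/
theorem discrete_energy_convex_splitting
    (M : ℕ) (hM : 2 ≤ M) (X0 XM : ℝ) (hX : X0 < XM)
    (h : ℝ) (hh : h = (XM - X0) / (M : ℝ)) (τ : ℝ) (hτ : 0 < τ)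
    (H f Vc Ve Wc We : ℝ → ℝ)
    (hHconv : ConvexOn ℝ (Set.Ioi 0) H) (hHreg : ContDiffOn ℝ 1 H (Set.Ioi 0))
    (hf : ∀ s : ℝ, 0 < s → 0 < f s)
    (hVcconv : ConvexOn ℝ Set.univ Vc) (hVcreg : ContDiff ℝ 1 Vc)
    (hVeconv : ConvexOn ℝ Set.univ Ve) (hVereg : ContDiff ℝ 1 Ve)
    (hWcconv : ConvexOn ℝ Set.univ Wc) (hWcreg : ContDiff ℝ 1 Wc)
    (hWeconv : ConvexOn ℝ Set.univ We) (hWereg : ContDiff ℝ 1 We)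
    (hWceven : ∀ s : ℝ, Wc (-s) = Wc s) (hWeeven : ∀ s : ℝ, We (-s) = We s)
    (u0 u0half : ℕ → ℝ)
    (hu0 : ∀ i ≤ M, 0 < u0 i)
    (hu0half : ∀ i, 1 ≤ i → i ≤ M → 0 < u0half i)
 :
    ConvexOn ℝ {l : ℕ → ℝ | inQ M X0 XM l} (ENc M h H Vc Wc u0 u0half)
    ∧ ConvexOn ℝ Set.univ (ENe M h Ve We u0)
    ∧ ∀ x : ℕ → ℝ,
        EN M h H (fun s => Vc s - Ve s) (fun s => Wc s - We s) u0 u0half x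
          = ENc M h H Vc Wc u0 u0half x - ENe M h Ve We u0 x :=
  discrete_energy_convex_splitting_general M hM X0 XM hX h hh H Vc Ve Wc We hHconv hVcconv hVeconv
    hWcconv hWeconv u0 u0half hu0 hu0half
end
end
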